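/- arXiv:2107.06466 — 3 statements merged into one kernel-verified Lean document; each statement's English description precedes it below -/
import Mathlib

section
/- There exist absolute constants c > 0 and C > 0 such that the following holds. Let 1 ≤ k ≤ d and let W* ∈ ℝ^{d×k} have nonzero columns w₁,…,w_k and full column rank, with condition number κ := s_max(W*)/s_min(W*) (ratio of largest to smallest singular value); write w̄_i := w_i/‖w_i‖₂. Let U ∈ ℝ^{d×k} have orthonormal columns spanning the column space of W*. Let V ∈ ℝ^{d×k} have orthonormal columns with ‖V Vᵀ − U Uᵀ‖ ≤ δ₂, where δ₂ ≤ c/(κ² √k). Let s₁,…,s_k ∈ {−1,1} and û₁,…,û_k ∈ ℝ^k satisfy ‖s_i û_i − Vᵀ w̄_i‖ ≤ δ₃ with δ₃ ≤ c/(κ² √k). Let z* ∈ ℝ^k and Q₁ := Σ_{i=1}^k z*_i s_i w̄_i ≠ 0, and let Q̂₁ ∈ ℝ^d satisfy ‖Q̂₁ − Q₁‖ ≤ δ₄ ‖Q₁‖ with δ₄ ≤ 1/4. Then the least-squares problem min_{z ∈ ℝ^k} ‖Σ_{i=1}^k z_i V û_i − Q̂₁‖₂ has a unique minimizer ẑ,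 and for every i ∈ [k]: |ẑ_i − z*_i| ≤ C (κ⁴ k^{3/2} (δ₂ + δ₃) + κ² k^{1/2} δ₄) ‖z*‖₁. -/
open Matrix

/-- Euclidean norm of a finite real vector. -/
noncomputable def l2norm {ι : Type*} [Fintype ι] (x : ι → ℝ) : ℝ :=
  Real.sqrt (∑ i, x i ^ 2)

/-- Spectral (ℓ₂ operator) norm of a real matrix. -/
noncomputable def specNorm {m n : Type*} [Fintype m] [Fintype n] [DecidableEq n]
    (M : Matrix m n ℝ) : ℝ :=
  ‖LinearMap.toContinuousLinearMap (Matrix.toEuclideanLin M)‖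

/-- Smallest singular value of a tall matrix (minimum of `‖Wx‖` over unit vectors `x`). -/
noncomputable def sminCol {d k : ℕ} (W : Matrix (Fin d) (Fin k) ℝ) : ℝ :=
  sInf {y | ∃ x : Fin k → ℝ, l2norm x = 1 ∧ y = l2norm (W.mulVec x)}

/-!
Let `A` be the matrix with columns `V ûᵢ` and `B` the one with columns `sᵢ w̄ᵢ`, so that
`Q₁ = B z*`. Since `B` is `W` with its columns rescaled by `sᵢ / ‖wᵢ‖` and
`‖wᵢ‖ ≤ s_max(W)`, we have `‖B z‖ ≥ ‖z‖ / κ`. Because `U Uᵀ` fixes the column space of `W`,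
`sᵢ (V ûᵢ - sᵢ w̄ᵢ) = (V Vᵀ - U Uᵀ) w̄ᵢ + V (sᵢ ûᵢ - Vᵀ w̄ᵢ)`, so every column of `A - B` has
norm at most `δ₂ + δ₃` and `‖(A - B) z‖ ≤ (δ₂ + δ₃) ‖z‖₁ ≤ (δ₂ + δ₃) √k ‖z‖ ≤ ‖z‖ / (2κ)`.
Hence `‖A z‖ ≥ ‖z‖ / (2κ)`: `A` is injective, the least-squares solution `ẑ` is the unique
preimage of the orthogonal projection of `Q̂₁` onto the range of `A`, and
`‖ẑ - z*‖ ≤ 2κ ‖A ẑ - A z*‖ ≤ 4κ ‖A z* - Q̂₁‖ ≤ 4κ (δ₂ + δ₃ + δ₄) ‖z*‖₁`.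
As `κ ≥ 1` and `k ≥ 1`, this gives the claim with `c = 1/4` and `C = 4`.
-/

open WithLp

section L2Norm

variable {ι : Type*} [Fintype ι]

lemma l2norm_eq_norm_toLp (x : ι → ℝ) : l2norm x = ‖toLp 2 x‖ := by
  simp [EuclideanSpace.norm_eq, l2norm, Real.norm_eq_abs, sq_abs]

lemma l2norm_nonneg (x : ι → ℝ) : 0 ≤ l2norm x := Real.sqrt_nonneg _

lemma l2norm_eq_zero {x : ι → ℝ} : l2norm x = 0 ↔ x = 0 := by
  simp [l2norm_eq_norm_toLp]

lemma l2norm_pos {x : ι → ℝ} (hx : x ≠ 0) : 0 < l2norm x :=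
  (l2norm_nonneg x).lt_of_ne' (l2norm_eq_zero.not.2 hx)

lemma l2norm_smul (c : ℝ) (x : ι → ℝ) : l2norm (c • x) = |c| * l2norm x := by
  simp [l2norm_eq_norm_toLp, norm_smul]

lemma l2norm_single_one [DecidableEq ι] (i : ι) : l2norm (Pi.single i (1 : ℝ)) = 1 := by
  simp [l2norm_eq_norm_toLp]

lemma l2norm_inv_smul_self {x : ι → ℝ} (hx : x ≠ 0) : l2norm ((l2norm x)⁻¹ • x) = 1 := by
  rw [l2norm_smul, abs_inv, abs_of_pos (l2norm_pos hx), inv_mul_cancel₀ (l2norm_pos hx).ne']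

lemma l2norm_sub_comm (x y : ι → ℝ) : l2norm (x - y) = l2norm (y - x) := by
  simp only [l2norm_eq_norm_toLp, toLp_sub, norm_sub_rev]

lemma l2norm_add_le (x y : ι → ℝ) : l2norm (x + y) ≤ l2norm x + l2norm y := by
  simpa only [l2norm_eq_norm_toLp, toLp_add] using norm_add_le _ _

lemma l2norm_sub_le_add (x y z : ι → ℝ) : l2norm (x - z) ≤ l2norm (x - y) + l2norm (y - z) := by
  simpa only [l2norm_eq_norm_toLp, toLp_sub] using norm_sub_le_norm_sub_add_norm_sub _ _ _

lemma l2norm_sum_le {κ : Type*} (s : Finset κ) (f : κ → ι → ℝ) :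
    l2norm (∑ j ∈ s, f j) ≤ ∑ j ∈ s, l2norm (f j) := by
  simpa only [l2norm_eq_norm_toLp, toLp_sum] using norm_sum_le _ _

lemma abs_le_l2norm (x : ι → ℝ) (i : ι) : |x i| ≤ l2norm x := by
  rw [← Real.sqrt_sq_eq_abs]
  exact Real.sqrt_le_sqrt (Finset.single_le_sum (fun j _ => sq_nonneg (x j)) (Finset.mem_univ i))

lemma l2norm_le_l2norm_of_abs_le {x y : ι → ℝ} (h : ∀ i, |x i| ≤ |y i|) :
    l2norm x ≤ l2norm y :=
  Real.sqrt_le_sqrt <| Finset.sum_le_sum fun i _ => sq_le_sq.2 (h i)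

lemma sum_abs_le_sqrt_card_mul_l2norm (x : ι → ℝ) :
    ∑ i, |x i| ≤ √(Fintype.card ι) * l2norm x := by
  rw [l2norm, ← Real.sqrt_mul (Nat.cast_nonneg _)]
  refine Real.le_sqrt_of_sq_le ?_
  simpa [sq_abs] using sq_sum_le_card_mul_sum_sq (s := Finset.univ) (f := fun i => |x i|)

end L2Norm

namespace Matrix

section

variable {m n : Type*} [Fintype n]

lemma mulVec_injective_of_rank_eq_card {W : Matrix m n ℝ} (h : W.rank = Fintype.card n) :
    Function.Injective W.mulVec := by
  have hker : Module.finrank ℝ (LinearMap.ker W.mulVecLin) = 0 := by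
    have := LinearMap.finrank_range_add_finrank_ker W.mulVecLin
    rw [← Matrix.rank, h, Module.finrank_fintype_fun_eq_card] at this
    omega
  rw [← coe_mulVecLin, ← LinearMap.ker_eq_bot]
  exact Submodule.finrank_eq_zero.1 hker

lemma col_ne_zero_of_mulVec_injective [DecidableEq n] {W : Matrix m n ℝ}
    (hW : Function.Injective W.mulVec) (i : n) : W.col i ≠ 0 := by
  rw [← mulVec_single_one, ← mulVec_zero W]
  exact hW.ne (Pi.single_ne_zero_iff.2 one_ne_zero)

lemma col_mul_diagonal [DecidableEq n] (M : Matrix m n ℝ) (c : n → ℝ) (i : n) :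
    (M * diagonal c).col i = c i • M.col i := by
  ext a; simp [mul_diagonal, mul_comm]

end

variable {m n : Type*} [Fintype m] [Fintype n]

lemma l2norm_mulVec_le_specNorm [DecidableEq n] (M : Matrix m n ℝ) (x : n → ℝ) :
    l2norm (M *ᵥ x) ≤ specNorm M * l2norm x := by
  simpa [l2norm_eq_norm_toLp, specNorm] using
    (LinearMap.toContinuousLinearMap (toEuclideanLin M)).le_opNorm (toLp 2 x)

lemma l2norm_col_le_specNorm [DecidableEq n] (M : Matrix m n ℝ) (i : n) :
    l2norm (M.col i) ≤ specNorm M := by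
  simpa [mulVec_single_one, l2norm_single_one] using M.l2norm_mulVec_le_specNorm (Pi.single i 1)

lemma l2norm_mulVec_le_of_col_le {M : Matrix m n ℝ} {ε : ℝ} (hM : ∀ i, l2norm (M.col i) ≤ ε)
    (z : n → ℝ) : l2norm (M *ᵥ z) ≤ ε * ∑ i, |z i| := by
  have h : M *ᵥ z = ∑ i, z i • M.col i := by
    ext a; simp [mulVec, dotProduct, mul_comm]
  rw [h, Finset.mul_sum]
  refine (l2norm_sum_le _ _).trans (Finset.sum_le_sum fun i _ => ?_)
  rw [l2norm_smul, mul_comm]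
  exact mul_le_mul_of_nonneg_right (hM i) (abs_nonneg _)

lemma le_l2norm_mulVec_of_col_sub_le {A B : Matrix m n ℝ} {μ ε : ℝ} (hε : 0 ≤ ε)
    (hB : ∀ z, μ * l2norm z ≤ l2norm (B *ᵥ z)) (hAB : ∀ i, l2norm ((A - B).col i) ≤ ε)
    (z : n → ℝ) : (μ - ε * √(Fintype.card n)) * l2norm z ≤ l2norm (A *ᵥ z) := by
  have h₁ := l2norm_add_le (A *ᵥ z) (B *ᵥ z - A *ᵥ z)
  rw [add_sub_cancel, l2norm_sub_comm, ← sub_mulVec] at h₁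
  have h₂ : l2norm ((A - B) *ᵥ z) ≤ ε * (√(Fintype.card n) * l2norm z) :=
    (l2norm_mulVec_le_of_col_le hAB z).trans
      (mul_le_mul_of_nonneg_left (sum_abs_le_sqrt_card_mul_l2norm z) hε)
  linarith [hB z]

lemma mulVec_injective_of_le_l2norm {A : Matrix m n ℝ} {μ : ℝ} (hμ : 0 < μ)
    (hA : ∀ z, μ * l2norm z ≤ l2norm (A *ᵥ z)) : Function.Injective A.mulVec := by
  intro x y h
  have := hA (x - y)
  rw [mulVec_sub, h, sub_self, l2norm_eq_zero.2 rfl] at this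
  exact sub_eq_zero.1 (l2norm_eq_zero.1 (le_antisymm
    (nonpos_of_mul_nonpos_right this hμ) (l2norm_nonneg _)))

lemma l2norm_mulVec_of_transpose_mul_self [DecidableEq n] {V : Matrix m n ℝ} (hV : Vᵀ * V = 1)
    (x : n → ℝ) : l2norm (V *ᵥ x) = l2norm x := by
  have h : V *ᵥ x ⬝ᵥ V *ᵥ x = x ⬝ᵥ x := by
    rw [dotProduct_mulVec, ← mulVec_transpose, mulVec_mulVec, hV, one_mulVec]
  simp only [l2norm, dotProduct, ← sq] at h ⊢
  rw [h]

lemma mul_transpose_mulVec_of_mem_range [DecidableEq n] {U : Matrix m n ℝ} (hU : Uᵀ * U = 1)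
    {w : m → ℝ} (hw : w ∈ LinearMap.range U.mulVecLin) : (U * Uᵀ) *ᵥ w = w := by
  obtain ⟨t, rfl⟩ := hw
  simp [mulVec_mulVec, Matrix.mul_assoc, hU]

lemma l2norm_mulVec_sub_smul_le [DecidableEq m] [DecidableEq n] {U V : Matrix m n ℝ}
    (hU : Uᵀ * U = 1) (hV : Vᵀ * V = 1) {w : m → ℝ} (hw : w ∈ LinearMap.range U.mulVecLin)
    {s : ℝ} (hs : |s| = 1) (u : n → ℝ) :
    l2norm (V *ᵥ u - s • w) ≤
      specNorm (V * Vᵀ - U * Uᵀ) * l2norm w + l2norm (s • u - Vᵀ *ᵥ w) := by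
  have hss : s * s = 1 := by rw [← abs_mul_abs_self, hs, one_mul]
  have h : V *ᵥ u - s • w = s • ((V * Vᵀ - U * Uᵀ) *ᵥ w + V *ᵥ (s • u - Vᵀ *ᵥ w)) := by
    rw [sub_mulVec, mul_transpose_mulVec_of_mem_range hU hw, mulVec_sub, mulVec_smul,
      mulVec_mulVec, smul_add, smul_sub, smul_sub, smul_smul, hss, one_smul]
    abel
  rw [h, l2norm_smul, hs, one_mul, ← l2norm_mulVec_of_transpose_mul_self hV (s • u - _)]
  exact (l2norm_add_le _ _).trans (add_le_add_left (l2norm_mulVec_le_specNorm _ _) _)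

end Matrix

section SminCol

variable {d k : ℕ} (W : Matrix (Fin d) (Fin k) ℝ)

lemma sminCol_le_of_l2norm_eq_one {x : Fin k → ℝ} (hx : l2norm x = 1) :
    sminCol W ≤ l2norm (W *ᵥ x) :=
  csInf_le ⟨0, by rintro _ ⟨y, -, rfl⟩; exact l2norm_nonneg _⟩ ⟨x, hx, rfl⟩

lemma sminCol_mul_le (x : Fin k → ℝ) : sminCol W * l2norm x ≤ l2norm (W *ᵥ x) := by
  rcases eq_or_ne x 0 with rfl | hx
  · simp [l2norm_eq_zero.2]
  have h := sminCol_le_of_l2norm_eq_one W (l2norm_inv_smul_self hx)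
  rw [mulVec_smul, l2norm_smul, abs_inv, abs_of_pos (l2norm_pos hx)] at h
  rwa [← le_inv_mul_iff₀' (l2norm_pos hx)]

lemma sminCol_pos (hk : 0 < k) (hW : Function.Injective W.mulVec) : 0 < sminCol W := by
  have hinj : Function.Injective (toEuclideanLin W) := fun x y h =>
    ofLp_injective 2 (hW (congrArg ofLp h))
  obtain ⟨K, hK, hKW⟩ := (toEuclideanLin W).injective_iff_antilipschitz.1 hinj
  refine (inv_pos.2 (NNReal.coe_pos.2 hK)).trans_le <|
    le_csInf ⟨_, _, l2norm_single_one (⟨0, hk⟩ : Fin k), rfl⟩ ?_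
  rintro _ ⟨x, hx, rfl⟩
  have h : l2norm x ≤ K * l2norm (W *ᵥ x) := by
    simpa [l2norm_eq_norm_toLp] using hKW.le_mul_norm_sub (toLp 2 x) 0
  rwa [hx, ← inv_le_iff_one_le_mul₀' (NNReal.coe_pos.2 hK)] at h

lemma sminCol_le_specNorm (hk : 0 < k) : sminCol W ≤ specNorm W := by
  have hunit := l2norm_single_one (⟨0, hk⟩ : Fin k)
  simpa [hunit] using (sminCol_le_of_l2norm_eq_one W hunit).trans
    (W.l2norm_mulVec_le_specNorm _)

lemma one_le_specNorm_div_sminCol (hk : 0 < k) (hW : Function.Injective W.mulVec) :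
    1 ≤ specNorm W / sminCol W :=
  (one_le_div (sminCol_pos W hk hW)).2 (sminCol_le_specNorm W hk)

lemma sminCol_mul_mul_le_l2norm_mulVec_mul_diagonal {c : Fin k → ℝ} {r : ℝ} (hr : 0 ≤ r)
    (hc : ∀ i, r ≤ |c i|) (z : Fin k → ℝ) :
    sminCol W * r * l2norm z ≤ l2norm ((W * diagonal c) *ᵥ z) := by
  have hsmin : 0 ≤ sminCol W := Real.sInf_nonneg (by rintro _ ⟨x, -, rfl⟩; exact l2norm_nonneg _)
  have hcz : r * l2norm z ≤ l2norm (diagonal c *ᵥ z) := by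
    rw [← abs_of_nonneg hr, ← l2norm_smul]
    refine l2norm_le_l2norm_of_abs_le fun i => ?_
    rw [mulVec_diagonal, Pi.smul_apply, smul_eq_mul, abs_mul, abs_mul, abs_of_nonneg hr]
    exact mul_le_mul_of_nonneg_right (hc i) (abs_nonneg _)
  rw [← mulVec_mulVec, mul_assoc]
  exact (mul_le_mul_of_nonneg_left hcz hsmin).trans (sminCol_mul_le W _)

end SminCol

namespace Submodule

variable {F : Type*} [NormedAddCommGroup F] [InnerProductSpace ℝ F]
  (K : Submodule ℝ F) [K.HasOrthogonalProjection]

lemma norm_sub_starProjection_le (u : F) {v : F} (hv : v ∈ K) :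
    ‖u - K.starProjection u‖ ≤ ‖u - v‖ := by
  rw [starProjection_minimal]
  exact ciInf_le ⟨0, by rintro _ ⟨x, rfl⟩; positivity⟩ (⟨v, hv⟩ : K)

lemma eq_starProjection_of_forall_norm_sub_le {u v : F} (hv : v ∈ K)
    (hmin : ∀ w ∈ K, ‖u - v‖ ≤ ‖u - w‖) : v = K.starProjection u := by
  have h : ‖u - v‖ = ⨅ w : K, ‖u - w‖ :=
    le_antisymm (le_ciInf fun w => hmin w w.2)
      (ciInf_le ⟨0, by rintro _ ⟨x, rfl⟩; positivity⟩ (⟨v, hv⟩ : K))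
  exact (K.eq_starProjection_of_mem_of_inner_eq_zero hv
    ((K.norm_eq_iInf_iff_real_inner_eq_zero hv).1 h)).symm

end Submodule

namespace Matrix

section LeastSquares

variable {m n : Type*} [Fintype m] [Fintype n]

def IsLeastSquaresSolution (A : Matrix m n ℝ) (q : m → ℝ) (z : n → ℝ) : Prop :=
  ∀ z', l2norm (A *ᵥ z - q) ≤ l2norm (A *ᵥ z' - q)

lemma existsUnique_isLeastSquaresSolution [DecidableEq n] {A : Matrix m n ℝ}
    (hA : Function.Injective A.mulVec) (q : m → ℝ) : ∃! z, A.IsLeastSquaresSolution q z := by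
  set K := LinearMap.range (toEuclideanLin A)
  have hdist : ∀ z, l2norm (A *ᵥ z - q) = ‖toLp 2 q - toEuclideanLin A (toLp 2 z)‖ := fun z => by
    rw [l2norm_sub_comm, l2norm_eq_norm_toLp, toLp_sub]; rfl
  obtain ⟨x, hx⟩ : K.starProjection (toLp 2 q) ∈ K := K.starProjection_apply_mem _
  refine ⟨ofLp x, fun z' => ?_, fun z hz => ?_⟩
  · rw [hdist, hdist, toLp_ofLp, hx]
    exact K.norm_sub_starProjection_le _ (LinearMap.mem_range_self _ _)
  · have h := K.eq_starProjection_of_forall_norm_sub_le (LinearMap.mem_range_self _ (toLp 2 z))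
      (by rintro _ ⟨z', rfl⟩; simpa [hdist] using hz (ofLp z'))
    rw [← hx] at h
    exact hA (congrArg ofLp h)

lemma l2norm_sub_le_of_isLeastSquaresSolution {A : Matrix m n ℝ} {μ : ℝ} (hμ : 0 < μ)
    (hA : ∀ z, μ * l2norm z ≤ l2norm (A *ᵥ z)) {q : m → ℝ} {zhat : n → ℝ}
    (hz : A.IsLeastSquaresSolution q zhat) (z : n → ℝ) :
    l2norm (zhat - z) ≤ 2 / μ * l2norm (A *ᵥ z - q) := by
  rw [div_mul_eq_mul_div, le_div_iff₀' hμ]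
  calc μ * l2norm (zhat - z) ≤ l2norm (A *ᵥ zhat - A *ᵥ z) := by rw [← mulVec_sub]; exact hA _
    _ ≤ l2norm (A *ᵥ zhat - q) + l2norm (q - A *ᵥ z) := l2norm_sub_le_add _ _ _
    _ ≤ 2 * l2norm (A *ᵥ z - q) := by rw [l2norm_sub_comm q]; linarith [hz z]

theorem exists_isLeastSquaresSolution_of_col_sub_le [DecidableEq n] {A B : Matrix m n ℝ}
    {μ ε : ℝ} (hμ : 0 < μ) (hε : 0 ≤ ε) (hεμ : ε * √(Fintype.card n) ≤ μ / 2)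
    (hB : ∀ z, μ * l2norm z ≤ l2norm (B *ᵥ z)) (hAB : ∀ i, l2norm ((A - B).col i) ≤ ε)
    (q : m → ℝ) :
    ∃ zhat, A.IsLeastSquaresSolution q zhat ∧
      (∀ z, A.IsLeastSquaresSolution q z → z = zhat) ∧
      ∀ z, l2norm (zhat - z) ≤ 4 / μ * (ε * ∑ i, |z i| + l2norm (B *ᵥ z - q)) := by
  have hA : ∀ z, μ / 2 * l2norm z ≤ l2norm (A *ᵥ z) := fun z =>
    (le_l2norm_mulVec_of_col_sub_le hε hB hAB z).trans' <|
      mul_le_mul_of_nonneg_right (by linarith) (l2norm_nonneg z)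
  obtain ⟨zhat, hmin, huniq⟩ :=
    existsUnique_isLeastSquaresSolution (mulVec_injective_of_le_l2norm (half_pos hμ) hA) q
  refine ⟨zhat, hmin, huniq, fun z => ?_⟩
  have hres : l2norm (A *ᵥ z - q) ≤ ε * ∑ i, |z i| + l2norm (B *ᵥ z - q) := by
    have h := l2norm_sub_le_add (A *ᵥ z) (B *ᵥ z) q
    rw [← sub_mulVec] at h
    linarith [l2norm_mulVec_le_of_col_le hAB z]
  calc l2norm (zhat - z) ≤ 2 / (μ / 2) * l2norm (A *ᵥ z - q) :=
        l2norm_sub_le_of_isLeastSquaresSolution (half_pos hμ) hA hmin z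
    _ ≤ 4 / μ * (ε * ∑ i, |z i| + l2norm (B *ᵥ z - q)) := by
        rw [show 2 / (μ / 2) = 4 / μ by ring]
        gcongr

end LeastSquares

section NormalizeCols

variable {m n : Type*} [Fintype m]

noncomputable def normalizeCols (W : Matrix m n ℝ) : Matrix m n ℝ :=
  of fun a i => W a i / l2norm (W.col i)

lemma col_normalizeCols (W : Matrix m n ℝ) (i : n) :
    (normalizeCols W).col i = (l2norm (W.col i))⁻¹ • W.col i := by
  ext a; simp [normalizeCols, div_eq_inv_mul, col_apply]

variable [Fintype n] [DecidableEq n]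

lemma normalizeCols_eq_mul_diagonal (W : Matrix m n ℝ) :
    normalizeCols W = W * diagonal fun i => (l2norm (W.col i))⁻¹ := by
  ext a i; simp [normalizeCols, mul_diagonal, div_eq_mul_inv]

lemma col_normalizeCols_mem_range (W : Matrix m n ℝ) (i : n) :
    (normalizeCols W).col i ∈ LinearMap.range W.mulVecLin :=
  ⟨Pi.single i (l2norm (W.col i))⁻¹, by ext a; simp [normalizeCols, mulVec_single, div_eq_mul_inv]⟩

lemma l2norm_col_normalizeCols {W : Matrix m n ℝ} (hW : Function.Injective W.mulVec) (i : n) :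
    l2norm ((normalizeCols W).col i) = 1 := by
  rw [col_normalizeCols]; exact l2norm_inv_smul_self (col_ne_zero_of_mulVec_injective hW i)

lemma l2norm_mulVec_normalizeCols_mul_diagonal_le {W : Matrix m n ℝ}
    (hW : Function.Injective W.mulVec) {s : n → ℝ} (hs : ∀ i, |s i| = 1) (z : n → ℝ) :
    l2norm ((normalizeCols W * diagonal s) *ᵥ z) ≤ ∑ i, |z i| :=
  (l2norm_mulVec_le_of_col_le (fun i => by
    rw [col_mul_diagonal, l2norm_smul, hs, l2norm_col_normalizeCols hW, one_mul]) z).trans_eq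
    (one_mul _)

end NormalizeCols

end Matrix

lemma inv_specNorm_div_sminCol_mul_le_l2norm_mulVec {d k : ℕ} {W : Matrix (Fin d) (Fin k) ℝ}
    (hW : Function.Injective W.mulVec) {s : Fin k → ℝ} (hs : ∀ i, |s i| = 1) (z : Fin k → ℝ) :
    (specNorm W / sminCol W)⁻¹ * l2norm z ≤ l2norm ((normalizeCols W * diagonal s) *ᵥ z) := by
  rw [normalizeCols_eq_mul_diagonal, Matrix.mul_assoc, diagonal_mul_diagonal, inv_div,
    div_eq_mul_inv]
  refine sminCol_mul_mul_le_l2norm_mulVec_mul_diagonal W (inv_nonneg.2 (norm_nonneg _))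
    (fun i => ?_) z
  rw [abs_mul, hs, mul_one, abs_inv, abs_of_nonneg (l2norm_nonneg _)]
  exact inv_anti₀ (l2norm_pos (col_ne_zero_of_mulVec_injective hW i)) (l2norm_col_le_specNorm W i)

theorem exists_isLeastSquaresSolution_of_normalizeCols {d k : ℕ} (hk : 0 < k)
    {W U V : Matrix (Fin d) (Fin k) ℝ} (hW : Function.Injective W.mulVec) (hU : Uᵀ * U = 1)
    (hUW : LinearMap.range U.mulVecLin = LinearMap.range W.mulVecLin) (hV : Vᵀ * V = 1)
    {s : Fin k → ℝ} (hs : ∀ i, |s i| = 1) {uhat : Fin k → Fin k → ℝ} {δ₂ δ₃ δ₄ : ℝ}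
    (hδ₂ : specNorm (V * Vᵀ - U * Uᵀ) ≤ δ₂)
    (hδ₃ : ∀ i, l2norm (s i • uhat i - Vᵀ *ᵥ (normalizeCols W).col i) ≤ δ₃)
    (hsmall : (δ₂ + δ₃) * √k ≤ (specNorm W / sminCol W)⁻¹ / 2) (hδ₄ : 0 ≤ δ₄)
    {zstar : Fin k → ℝ} {q : Fin d → ℝ}
    (hq : l2norm (q - (normalizeCols W * diagonal s) *ᵥ zstar) ≤
      δ₄ * l2norm ((normalizeCols W * diagonal s) *ᵥ zstar)) :
    ∃ zhat, (of fun a i => (V *ᵥ uhat i) a).IsLeastSquaresSolution q zhat ∧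
      (∀ z, (of fun a i => (V *ᵥ uhat i) a).IsLeastSquaresSolution q z → z = zhat) ∧
      l2norm (zhat - zstar) ≤ 4 * (specNorm W / sminCol W) * (δ₂ + δ₃ + δ₄) * ∑ i, |zstar i| := by
  have hε : 0 ≤ δ₂ + δ₃ :=
    add_nonneg ((norm_nonneg _).trans hδ₂) ((l2norm_nonneg _).trans (hδ₃ ⟨0, hk⟩))
  have hcol (i : Fin k) :
      l2norm (((of fun a i => (V *ᵥ uhat i) a) - normalizeCols W * diagonal s).col i) ≤
        δ₂ + δ₃ := by
    have h := l2norm_mulVec_sub_smul_le hU hV (hUW ▸ col_normalizeCols_mem_range W i) (hs i)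
      (uhat i)
    rw [l2norm_col_normalizeCols hW, mul_one, ← col_mul_diagonal] at h
    exact h.trans (add_le_add hδ₂ (hδ₃ i))
  have hres : l2norm ((normalizeCols W * diagonal s) *ᵥ zstar - q) ≤ δ₄ * ∑ i, |zstar i| := by
    rw [l2norm_sub_comm]
    exact hq.trans (mul_le_mul_of_nonneg_left
      (l2norm_mulVec_normalizeCols_mul_diagonal_le hW hs zstar) hδ₄)
  have hκ := one_le_specNorm_div_sminCol W hk hW
  obtain ⟨zhat, hmin, huniq, herr⟩ := exists_isLeastSquaresSolution_of_col_sub_le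
    (inv_pos.2 (by linarith)) hε (by rwa [Fintype.card_fin])
    (inv_specNorm_div_sminCol_mul_le_l2norm_mulVec hW hs) hcol q
  refine ⟨zhat, hmin, huniq, (herr zstar).trans ?_⟩
  rw [div_inv_eq_mul, mul_assoc _ (δ₂ + δ₃ + δ₄), add_mul]
  exact mul_le_mul_of_nonneg_left (by linarith) (by linarith)

lemma add_mul_sqrt_le_of_le_div {κ k δ₂ δ₃ : ℝ} (hκ : 1 ≤ κ) (hk : 0 < k)
    (h₂ : δ₂ ≤ 1 / 4 / (κ ^ 2 * √k)) (h₃ : δ₃ ≤ 1 / 4 / (κ ^ 2 * √k)) :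
    (δ₂ + δ₃) * √k ≤ κ⁻¹ / 2 := by
  have hsk : 0 < √k := Real.sqrt_pos.2 hk
  calc (δ₂ + δ₃) * √k ≤ 2 * (1 / 4 / (κ ^ 2 * √k)) * √k := by gcongr; linarith
    _ = κ⁻¹ / 2 * κ⁻¹ := by field_simp; ring
    _ ≤ κ⁻¹ / 2 := mul_le_of_le_one_right (by positivity) (inv_le_one_of_one_le₀ hκ)

lemma mul_add_le_rpow_mul_add_sqrt_mul {κ k ε δ : ℝ} (hκ : 1 ≤ κ) (hk : 1 ≤ k) (hε : 0 ≤ ε)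
    (hδ : 0 ≤ δ) : κ * (ε + δ) ≤ κ ^ 4 * k ^ ((3 : ℝ) / 2) * ε + κ ^ 2 * √k * δ := by
  have h₁ : κ ≤ κ ^ 4 * k ^ ((3 : ℝ) / 2) :=
    (le_self_pow₀ hκ (by norm_num)).trans
      (le_mul_of_one_le_right (by positivity) (Real.one_le_rpow hk (by norm_num)))
  have h₂ : κ ≤ κ ^ 2 * √k :=
    (le_self_pow₀ hκ (by norm_num)).trans
      (le_mul_of_one_le_right (by positivity) (Real.one_le_sqrt.2 hk))
  rw [mul_add]
  gcongr

/-- Lemma A.12, `solution_system_1`, of the paper. Robust recovery of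
the coefficients `z*` from the approximate linear system
`min_z ‖∑ i, z_i V û_i − Q̂₁‖`: the least-squares problem has a unique minimizer `ẑ`, and
`|ẑ_i − z*_i| ≤ C (κ⁴ k^{3/2} (δ₂ + δ₃) + κ² √k δ₄) ‖z*‖₁`. -/
theorem linear_system_recovery_vector :
    ∃ c C : ℝ, 0 < c ∧ 0 < C ∧
    ∀ (d k : ℕ), 1 ≤ k → k ≤ d →
    ∀ W : Matrix (Fin d) (Fin k) ℝ,
      (∀ i, (fun a => W a i) ≠ 0) → W.rank = k →
    ∀ κ : ℝ, κ = specNorm W / sminCol W →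
    ∀ wbar : Fin k → Fin d → ℝ,
      (∀ i, wbar i = fun a => W a i / l2norm fun a' => W a' i) →
    ∀ U : Matrix (Fin d) (Fin k) ℝ, Uᵀ * U = 1 →
      LinearMap.range U.mulVecLin = LinearMap.range W.mulVecLin →
    ∀ V : Matrix (Fin d) (Fin k) ℝ, Vᵀ * V = 1 →
    ∀ δ₂ δ₃ δ₄ : ℝ,
      specNorm (V * Vᵀ - U * Uᵀ) ≤ δ₂ → δ₂ ≤ c / (κ ^ 2 * Real.sqrt k) →
    ∀ s : Fin k → ℝ, (∀ i, s i = 1 ∨ s i = -1) →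
    ∀ uhat : Fin k → Fin k → ℝ,
      (∀ i, l2norm (fun a => s i * uhat i a - Vᵀ.mulVec (wbar i) a) ≤ δ₃) →
      δ₃ ≤ c / (κ ^ 2 * Real.sqrt k) →
    ∀ zstar : Fin k → ℝ,
    ∀ Q₁ : Fin d → ℝ, (∀ a, Q₁ a = ∑ i, zstar i * s i * wbar i a) → Q₁ ≠ 0 →
    ∀ Q₁hat : Fin d → ℝ,
      l2norm (fun a => Q₁hat a - Q₁ a) ≤ δ₄ * l2norm Q₁ → δ₄ ≤ 1 / 4 →
    ∃ zhat : Fin k → ℝ,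
      (∀ z : Fin k → ℝ,
        l2norm (fun a => (∑ i, zhat i * V.mulVec (uhat i) a) - Q₁hat a) ≤
          l2norm (fun a => (∑ i, z i * V.mulVec (uhat i) a) - Q₁hat a)) ∧
      (∀ z' : Fin k → ℝ,
        (∀ z : Fin k → ℝ,
          l2norm (fun a => (∑ i, z' i * V.mulVec (uhat i) a) - Q₁hat a) ≤
            l2norm (fun a => (∑ i, z i * V.mulVec (uhat i) a) - Q₁hat a)) →
        z' = zhat) ∧
      ∀ i, |zhat i - zstar i| ≤
        C * (κ ^ 4 * (k : ℝ) ^ ((3 : ℝ) / 2) * (δ₂ + δ₃) +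
              κ ^ 2 * Real.sqrt k * δ₄) * ∑ i', |zstar i'| := by
  refine ⟨1 / 4, 4, by norm_num, by norm_num, ?_⟩
  intro d k hk _ W _ hWrank κ hκ wbar hwbar U hU hUrange V hV δ₂ δ₃ δ₄ hδ₂ hδ₂c s hs uhat huhat
    hδ₃c zstar Q₁ hQ₁ hQ₁ne Q₁hat hQ₁hat _
  obtain rfl : wbar = (normalizeCols W).col := funext hwbar
  obtain rfl : Q₁ = (normalizeCols W * diagonal s) *ᵥ zstar := by
    ext a; simp only [hQ₁, mulVec, dotProduct, mul_diagonal, col_apply]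
    exact Finset.sum_congr rfl fun i _ => by ring
  have hW : Function.Injective W.mulVec :=
    mulVec_injective_of_rank_eq_card (by rwa [Fintype.card_fin])
  have hκ1 : 1 ≤ κ := hκ ▸ one_le_specNorm_div_sminCol W hk hW
  have hs1 (i : Fin k) : |s i| = 1 := by rcases hs i with h | h <;> simp [h]
  have hδ₂₃ : 0 ≤ δ₂ + δ₃ :=
    add_nonneg ((norm_nonneg _).trans hδ₂) ((l2norm_nonneg _).trans (huhat ⟨0, hk⟩))
  have hδ₄ : 0 ≤ δ₄ := le_of_mul_le_mul_right
    (by rw [zero_mul]; exact (l2norm_nonneg _).trans hQ₁hat) (l2norm_pos hQ₁ne)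
  have hsmall : (δ₂ + δ₃) * √k ≤ (specNorm W / sminCol W)⁻¹ / 2 :=
    hκ ▸ add_mul_sqrt_le_of_le_div hκ1 (Nat.cast_pos.2 hk) hδ₂c hδ₃c
  obtain ⟨zhat, hmin, huniq, herr⟩ := exists_isLeastSquaresSolution_of_normalizeCols hk hW hU
    hUrange hV hs1 hδ₂ huhat hsmall hδ₄ hQ₁hat
  have hobj (z : Fin k → ℝ) : (fun a => (∑ i, z i * V.mulVec (uhat i) a) - Q₁hat a) =
      (of fun a i => (V *ᵥ uhat i) a) *ᵥ z - Q₁hat := by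
    ext a; simp [mulVec, dotProduct, mul_comm]
  simp only [hobj]
  refine ⟨zhat, hmin, huniq, fun i => (abs_le_l2norm (zhat - zstar) i).trans (herr.trans ?_)⟩
  rw [← hκ, mul_assoc 4 κ]
  gcongr 4 * ?_ * _
  exact mul_add_le_rpow_mul_add_sqrt_mul hκ1 (Nat.one_le_cast.2 hk) hδ₂₃ hδ₄
end

section
/- Consider a finite-horizon MDP as in the context and let ε ≥ 0. For h = 1,…,H let Q̂_h : S × A → ℝ be bounded and measurable with measurable action-supremum, and suppose sup_{s,a} |Q̂_h(s,a) − Q*_h(s,a)| ≤ ε for every h. Let π = (π₁,…,π_H) be a measurable greedy policy with respect to Q̂, i.e. Q̂_h(s, π_h(s)) = sup_{a ∈ A} Q̂_h(s,a) for all s and h. Then for every h ∈ {1,…,H} and every s ∈ S: V*_h(s) − V^π_h(s) ≤ 2(H − h + 1)ε; in particular V*₁(s) − V^π₁(s) ≤ 2Hε. -/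
open MeasureTheory ProbabilityTheory


private lemma integrable_of_abs_bound {S : Type*} [MeasurableSpace S]
    (μ : MeasureTheory.Measure S) [MeasureTheory.IsFiniteMeasure μ] {f : S → ℝ}
    (hf : Measurable f) {C : ℝ} (hC : ∀ s, |f s| ≤ C) :
    MeasureTheory.Integrable f μ :=
  ⟨hf.aestronglyMeasurable,
    MeasureTheory.HasFiniteIntegral.of_bounded
      (MeasureTheory.ae_of_all _ fun s => by simpa [Real.norm_eq_abs] using hC s)⟩

/-- greedy-policy suboptimality, from the proof of Theorem A.3 /
Theorem 3.3 of the paper. If `‖Q̂_h − Q*_h‖_∞ ≤ ε` for every `h` and `π` is greedy with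
respect to `Q̂`, then `V*_h(s) − V^π_h(s) ≤ 2 (H − h + 1) ε` for all `h` and `s`. -/
theorem greedy_policy_suboptimality
    {S A : Type*} [MeasurableSpace S] [MeasurableSpace A] [Nonempty A]
    (H : ℕ) (hH : 1 ≤ H)
    (P : ℕ → Kernel (S × A) S) (hP : ∀ h, IsMarkovKernel (P h))
    (r : ℕ → S → A → ℝ)
    (hrmeas : ∀ h, Measurable fun p : S × A => r h p.1 p.2)
    (Cr : ℝ) (hrbd : ∀ h s a, |r h s a| ≤ Cr)
    (Qstar : ℕ → S → A → ℝ) (Vstar : ℕ → S → ℝ)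
    (hQstarTop : ∀ s a, Qstar (H + 1) s a = 0)
    (hVstar : ∀ h s, Vstar h s = ⨆ a, Qstar h s a)
    (hVstarMeas : ∀ h, Measurable (Vstar h))
    (CQ : ℝ) (hQstarBd : ∀ h s a, |Qstar h s a| ≤ CQ)
    (hQstarRec : ∀ h, 1 ≤ h → h ≤ H → ∀ s a,
      Qstar h s a = r h s a + ∫ s', Vstar (h + 1) s' ∂(P h (s, a)))
    (ε : ℝ) (hε0 : 0 ≤ ε)
    (Qhat : ℕ → S → A → ℝ)
    (hQhatClose : ∀ h, 1 ≤ h → h ≤ H → ∀ s a, |Qhat h s a - Qstar h s a| ≤ ε)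
    (π : ℕ → S → A) (hπmeas : ∀ h, Measurable (π h))
    (hπgreedy : ∀ h, 1 ≤ h → h ≤ H → ∀ s, Qhat h s (π h s) = ⨆ a, Qhat h s a)
    (Qpi : ℕ → S → A → ℝ) (Vpi : ℕ → S → ℝ)
    (hQpiTop : ∀ s a, Qpi (H + 1) s a = 0)
    (hVpi : ∀ h s, Vpi h s = Qpi h s (π h s))
    (hVpiMeas : ∀ h, Measurable (Vpi h))
    (CQp : ℝ) (hQpiBd : ∀ h s a, |Qpi h s a| ≤ CQp)
    (hQpiRec : ∀ h, 1 ≤ h → h ≤ H → ∀ s a,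
      Qpi h s a = r h s a + ∫ s', Vpi (h + 1) s' ∂(P h (s, a))) :
    ∀ h, 1 ≤ h → h ≤ H → ∀ s,
      Vstar h s - Vpi h s ≤ 2 * ((H : ℝ) - (h : ℝ) + 1) * ε := by

  have hVstarBd : ∀ h s, |Vstar h s| ≤ CQ := by
    intro h s
    obtain ⟨a0⟩ := (inferInstance : Nonempty A)
    have hbdd : BddAbove (Set.range fun a => Qstar h s a) :=
      ⟨CQ, by rintro x ⟨a, rfl⟩; exact (abs_le.1 (hQstarBd h s a)).2⟩
    rw [hVstar, abs_le]
    exact ⟨le_trans (abs_le.1 (hQstarBd h s a0)).1 (le_ciSup hbdd a0),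
      ciSup_le fun a => (abs_le.1 (hQstarBd h s a)).2⟩
  have hVpiBd : ∀ h s, |Vpi h s| ≤ CQp := fun h s => by
    rw [hVpi]; exact hQpiBd h s (π h s)
  have key : ∀ h, 1 ≤ h → h ≤ H → ∀ c : ℝ, 0 ≤ c →
      (∀ s', Vstar (h + 1) s' - Vpi (h + 1) s' ≤ c) →
      ∀ s, Vstar h s - Vpi h s ≤ 2 * ε + c := by
    intro h h1 hH' c hc hrec s
    have hμ : IsProbabilityMeasure (P h (s, π h s)) := (hP h).isProbabilityMeasure _
    have hI1 : Integrable (Vstar (h + 1)) (P h (s, π h s)) :=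
      integrable_of_abs_bound _ (hVstarMeas _) (hVstarBd _)
    have hI2 : Integrable (Vpi (h + 1)) (P h (s, π h s)) :=
      integrable_of_abs_bound _ (hVpiMeas _) (hVpiBd _)
    have hQdiff : Qstar h s (π h s) - Qpi h s (π h s) ≤ c := by
      rw [hQstarRec h h1 hH' s (π h s), hQpiRec h h1 hH' s (π h s)]
      have hint : ∫ s', Vstar (h + 1) s' ∂(P h (s, π h s))
          - ∫ s', Vpi (h + 1) s' ∂(P h (s, π h s)) ≤ c := by
        rw [← integral_sub hI1 hI2]
        calc ∫ s', (Vstar (h + 1) s' - Vpi (h + 1) s') ∂(P h (s, π h s))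
            ≤ ∫ _, c ∂(P h (s, π h s)) :=
              integral_mono (hI1.sub hI2) (integrable_const c) fun s' => hrec s'
          _ = c := by simp
      linarith
    have hbdd : BddAbove (Set.range fun a => Qhat h s a) := by
      refine ⟨CQ + ε, ?_⟩
      rintro x ⟨a, rfl⟩
      have h1a := abs_le.1 (hQhatClose h h1 hH' s a)
      have h2a := abs_le.1 (hQstarBd h s a)
      simp only
      linarith [h1a.2, h2a.2]
    have hVup : Vstar h s ≤ Qstar h s (π h s) + 2 * ε := by
      rw [hVstar]
      refine ciSup_le fun a => ?_
      have h1a := abs_le.1 (hQhatClose h h1 hH' s a)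
      have h2 : Qhat h s a ≤ Qhat h s (π h s) := by
        rw [hπgreedy h h1 hH' s]; exact le_ciSup hbdd a
      have h3 := abs_le.1 (hQhatClose h h1 hH' s (π h s))
      linarith [h1a.2, h3.1]
    rw [hVpi]
    linarith
  have main : ∀ d h, 1 ≤ h → h + d = H → ∀ s,
      Vstar h s - Vpi h s ≤ 2 * ((d : ℝ) + 1) * ε := by
    intro d
    induction d with
    | zero =>
      intro h h1 hhH s
      have hH' : h ≤ H := by omega
      have hrec : ∀ s', Vstar (h + 1) s' - Vpi (h + 1) s' ≤ 0 := by
        intro s'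
        have he : h + 1 = H + 1 := by omega
        rw [he]
        have hv : Vstar (H + 1) s' = 0 := by rw [hVstar]; simp [hQstarTop]
        have hp : Vpi (H + 1) s' = 0 := by rw [hVpi, hQpiTop]
        rw [hv, hp]; norm_num
      have := key h h1 hH' 0 le_rfl hrec s
      push_cast
      linarith
    | succ d ih =>
      intro h h1 hhH s
      have hH' : h ≤ H := by omega
      have hrec : ∀ s', Vstar (h + 1) s' - Vpi (h + 1) s' ≤ 2 * ((d : ℝ) + 1) * ε :=
        fun s' => ih (h + 1) (by omega) (by omega) s'
      have := key h h1 hH' (2 * ((d : ℝ) + 1) * ε) (by positivity) hrec s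
      push_cast
      linarith
  intro h h1 hH' s
  have hdh : h + (H - h) = H := by omega
  have hcast : ((H - h : ℕ) : ℝ) = (H : ℝ) - (h : ℝ) := by
    push_cast [Nat.cast_sub hH']
    ring
  have := main (H - h) h h1 hdh s
  rw [hcast] at this
  linarith
end

section
/- Consider a finite-horizon MDP as in the context. Define the optimality gap ρ := inf{ V*_h(s) − Q*_h(s,a) : h ∈ {1,…,H}, s ∈ S, a ∈ A, Q*_h(s,a) < V*_h(s) } and suppose ρ > 0. For h = 1,…,H let Q̂_h : S × A → ℝ satisfy sup_{s,a} |Q̂_h(s,a) − Q*_h(s,a)| ≤ ρ/4, and let π = (π₁,…,π_H) be a measurable policy that is greedy with respect to Q̂, i.e. Q̂_h(s, π_h(s)) = sup_{a ∈ A} Q̂_h(s,a) for all s and h. Then Q*_h(s, π_h(s)) = V*_h(s) for all h and all s, and consequently V^π_h(s) = V*_h(s) for every h and s; i.e., π is an optimal policy. -/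
open MeasureTheory ProbabilityTheory

/-- key step of Theorem A.4 / Theorem 3.4 of the paper. If the MDP has
optimality gap `ρ > 0` (i.e. `V*_h(s) − Q*_h(s,a) ≥ ρ` whenever `Q*_h(s,a) < V*_h(s)`),
and `‖Q̂_h − Q*_h‖_∞ ≤ ρ/4` for every `h`, then any policy `π` greedy with respect to `Q̂`
satisfies `Q*_h(s, π_h(s)) = V*_h(s)` and `V^π_h(s) = V*_h(s)` for all `h` and `s`;
that is, `π` is optimal. -/
theorem gap_greedy_policy_optimal
    {S A : Type*} [MeasurableSpace S] [MeasurableSpace A] [Nonempty A]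
    (H : ℕ) (hH : 1 ≤ H)
    (P : ℕ → Kernel (S × A) S) (hP : ∀ h, IsMarkovKernel (P h))
    (r : ℕ → S → A → ℝ)
    (hrmeas : ∀ h, Measurable fun p : S × A => r h p.1 p.2)
    (Cr : ℝ) (hrbd : ∀ h s a, |r h s a| ≤ Cr)
    (Qstar : ℕ → S → A → ℝ) (Vstar : ℕ → S → ℝ)
    (hQstarTop : ∀ s a, Qstar (H + 1) s a = 0)
    (hVstar : ∀ h s, Vstar h s = ⨆ a, Qstar h s a)
    (hVstarMeas : ∀ h, Measurable (Vstar h))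
    (CQ : ℝ) (hQstarBd : ∀ h s a, |Qstar h s a| ≤ CQ)
    (hQstarRec : ∀ h, 1 ≤ h → h ≤ H → ∀ s a,
      Qstar h s a = r h s a + ∫ s', Vstar (h + 1) s' ∂(P h (s, a)))
    (ρ : ℝ) (hρ : 0 < ρ)
    (hgap : ∀ h, 1 ≤ h → h ≤ H → ∀ s a,
      Qstar h s a < Vstar h s → ρ ≤ Vstar h s - Qstar h s a)
    (Qhat : ℕ → S → A → ℝ)
    (hQhatClose : ∀ h, 1 ≤ h → h ≤ H → ∀ s a, |Qhat h s a - Qstar h s a| ≤ ρ / 4)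
    (π : ℕ → S → A) (hπmeas : ∀ h, Measurable (π h))
    (hπgreedy : ∀ h, 1 ≤ h → h ≤ H → ∀ s, Qhat h s (π h s) = ⨆ a, Qhat h s a)
    (Qpi : ℕ → S → A → ℝ) (Vpi : ℕ → S → ℝ)
    (hQpiTop : ∀ s a, Qpi (H + 1) s a = 0)
    (hVpi : ∀ h s, Vpi h s = Qpi h s (π h s))
    (hVpiMeas : ∀ h, Measurable (Vpi h))
    (CQp : ℝ) (hQpiBd : ∀ h s a, |Qpi h s a| ≤ CQp)
    (hQpiRec : ∀ h, 1 ≤ h → h ≤ H → ∀ s a,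
      Qpi h s a = r h s a + ∫ s', Vpi (h + 1) s' ∂(P h (s, a))) :
    ∀ h, 1 ≤ h → h ≤ H → ∀ s,
      Qstar h s (π h s) = Vstar h s ∧ Vpi h s = Vstar h s := by

  -- Step 1: greedy action is optimal
  have hkey : ∀ h, 1 ≤ h → h ≤ H → ∀ s, Qstar h s (π h s) = Vstar h s := by
    intro h h1 hH' s
    have hbddQ : BddAbove (Set.range fun a => Qstar h s a) :=
      ⟨CQ, by rintro _ ⟨a, rfl⟩; exact (abs_le.mp (hQstarBd h s a)).2⟩
    have hbddQhat : BddAbove (Set.range fun a => Qhat h s a) :=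
      ⟨CQ + ρ / 4, by
        rintro _ ⟨a, rfl⟩
        have h1 := (abs_le.mp (hQhatClose h h1 hH' s a)).2
        have h2 := (abs_le.mp (hQstarBd h s a)).2
        linarith⟩
    have hle : ∀ a, Qstar h s a ≤ Qstar h s (π h s) + ρ / 2 := by
      intro a
      have h1' := abs_le.mp (hQhatClose h h1 hH' s a)
      have h2' := abs_le.mp (hQhatClose h h1 hH' s (π h s))
      have h3 : Qhat h s a ≤ Qhat h s (π h s) := by
        rw [hπgreedy h h1 hH' s]; exact le_ciSup hbddQhat a
      linarith
    have hVle : Vstar h s ≤ Qstar h s (π h s) + ρ / 2 := by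
      rw [hVstar]; exact ciSup_le hle
    have hQleV : Qstar h s (π h s) ≤ Vstar h s := by
      rw [hVstar]; exact le_ciSup hbddQ (π h s)
    by_contra hne
    have hlt : Qstar h s (π h s) < Vstar h s := lt_of_le_of_ne hQleV hne
    have := hgap h h1 hH' s (π h s) hlt
    linarith
  -- Step 2: Vpi = Vstar by downward induction
  have hVtop : ∀ s, Vpi (H + 1) s = Vstar (H + 1) s := by
    intro s
    rw [hVpi, hQpiTop, hVstar]
    simp [hQstarTop]
  have haux : ∀ n h, h + n = H + 1 → 1 ≤ h → ∀ s, Vpi h s = Vstar h s := by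
    intro n
    induction n with
    | zero => intro h hsum _ s; rw [Nat.add_zero] at hsum; subst hsum; exact hVtop s
    | succ m ih =>
      intro h hsum h1 s
      have hle : h ≤ H := by omega
      have hnext : ∀ s', Vpi (h + 1) s' = Vstar (h + 1) s' :=
        ih (h + 1) (by omega) (by omega)
      have heq : Vpi (h + 1) = Vstar (h + 1) := funext hnext
      rw [hVpi, hQpiRec h h1 hle, heq, ← hQstarRec h h1 hle, hkey h h1 hle]
  intro h h1 hH' s
  exact ⟨hkey h h1 hH' s, haux (H + 1 - h) h (by omega) h1 s⟩
end
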